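/- Let b ≥ 2 and n ≥ 1 be integers, let R_n be a generalized Hammersley point set with discrepancy function D, and let j₁ ∈ ℕ₀ with j₁ ≥ n, m₁ ∈ {0,…,b^{j₁}−1}, ℓ₁ ∈ {1,…,b−1}. Then |∫_{[0,1)²} D(x₁,x₂)·h_{j₁,m₁,ℓ₁}(x₁) dx₁dx₂| = (1/2)·b^{−2j₁−1} / |exp(2πiℓ₁/b) − 1|. -/

import Mathlib

/-!
Integrating out `x₂`, the inner integral of `D` is `x₁ ↦ b⁻ⁿ ∑ₜ cₜ·1[z₁(t) < x₁] − x₁/2` with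
`cₜ = ∫₀¹ 1[z₂(t) < x₂] dx₂`: a step function minus a linear one. Its jumps `z₁(t)` lie in
`b⁻ⁿℤ ⊆ b^{-j₁}ℤ`, so none of them falls inside the support `I_{j₁,m₁}` of the Haar function,
where the inner integral is therefore affine with slope `−1/2`. With `ω = exp(2πiℓ₁/b) ≠ 1` a
`b`-th root of unity, `∑ₖ ωᵏ = 0` kills the constant part, and integrating `x` over the `b`
subintervals of `I_{j₁,m₁}` leaves `b^{-2j₁-2} ∑ₖ k ωᵏ = b^{-2j₁-1}/(ω − 1)`.
-/

open scoped Classical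
open Finset MeasureTheory

/-- `bexp b ℓ k = exp(2πiℓk/b)`. -/
noncomputable def bexp (b ℓ k : ℕ) : ℂ :=
  Complex.exp (2 * Real.pi * Complex.I * ℓ * k / b)

/-- The `b`-adic Haar function `h_{j,m,ℓ}` on `[0,1)`. -/
noncomputable def haar (b j m ℓ : ℕ) (x : ℝ) : ℂ :=
  ∑ k ∈ Finset.range b,
    if ((b:ℝ)^(j+1))⁻¹ * ((b:ℝ)*m + k) ≤ x ∧ x < ((b:ℝ)^(j+1))⁻¹ * ((b:ℝ)*m + k + 1)
    then bexp b ℓ k else 0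

/-- First coordinate of the generalized Hammersley point: `z₁ = tₙ/b + ⋯ + t₁/bⁿ`. -/
noncomputable def z1 (b n : ℕ) (t : Fin n → Fin b) : ℝ :=
  ∑ i : Fin n, ((t i : ℕ) : ℝ) / (b:ℝ) ^ (n - (i:ℕ))

/-- Second coordinate: `z₂ = s₁(t₁)/b + s₂(t₂)/b² + ⋯ + sₙ(tₙ)/bⁿ`. -/
noncomputable def z2 (b n : ℕ) (s : Fin n → ℕ → ℕ) (t : Fin n → Fin b) : ℝ :=
  ∑ i : Fin n, ((s i (t i : ℕ) : ℕ) : ℝ) / (b:ℝ) ^ ((i:ℕ) + 1)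

/-- Each `s i` is either the identity or the reflection `t ↦ b−1−t` on digits. -/
def IsDigitMaps (b n : ℕ) (s : Fin n → ℕ → ℕ) : Prop :=
  ∀ i, (∀ k, k < b → s i k = k) ∨ (∀ k, k < b → s i k = b - 1 - k)

/-- The discrepancy function of the generalized Hammersley point set. -/
noncomputable def disc (b n : ℕ) (s : Fin n → ℕ → ℕ) (x₁ x₂ : ℝ) : ℝ :=
  (b:ℝ) ^ (-(n:ℤ)) *
      ∑ t : Fin n → Fin b,
        (if z1 b n t < x₁ then (1:ℝ) else 0) * (if z2 b n s t < x₂ then (1:ℝ) else 0)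
    - x₁ * x₂

open Complex

lemma bexp_eq_pow (b ℓ k : ℕ) : bexp b ℓ k = exp (2 * Real.pi * I * ℓ / b) ^ k := by
  rw [bexp, ← Complex.exp_nat_mul]
  ring_nf

lemma exp_two_pi_mul_I_mul_div_eq_pow (b ℓ : ℕ) :
    exp (2 * Real.pi * I * ℓ / b) = exp (2 * Real.pi * I / b) ^ ℓ := by
  rw [← Complex.exp_nat_mul]
  ring_nf

lemma exp_two_pi_mul_I_mul_div_pow_eq_one (b ℓ : ℕ) (hb : b ≠ 0) :
    exp (2 * Real.pi * I * ℓ / b) ^ b = 1 := by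
  rw [exp_two_pi_mul_I_mul_div_eq_pow, pow_right_comm, (isPrimitiveRoot_exp b hb).pow_eq_one,
    one_pow]

lemma exp_two_pi_mul_I_mul_div_ne_one {b ℓ : ℕ} (hℓ : ℓ ≠ 0) (hℓb : ℓ < b) :
    exp (2 * Real.pi * I * ℓ / b) ≠ 1 := by
  rw [exp_two_pi_mul_I_mul_div_eq_pow]
  exact (isPrimitiveRoot_exp b (by omega)).pow_ne_one_of_pos_of_lt hℓ hℓb

lemma geom_sum_eq_zero_of_pow_eq_one {K : Type*} [Field K] {ω : K} {b : ℕ} (hω : ω ≠ 1)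
    (hωb : ω ^ b = 1) : ∑ k ∈ range b, ω ^ k = 0 := by
  rw [geom_sum_eq hω, hωb, sub_self, zero_div]

lemma mul_sum_range_mul_pow {R : Type*} [CommRing R] (x : R) (n : ℕ) :
    (x - 1) * ∑ k ∈ range n, (k : R) * x ^ k = (n - 1) * x ^ n - ∑ k ∈ range n, x ^ k + 1 := by
  induction n with
  | zero => simp
  | succ n ih =>
    rw [sum_range_succ, sum_range_succ, mul_add, ih]
    push_cast
    ring

lemma sum_range_mul_pow_of_pow_eq_one {K : Type*} [Field K] {ω : K} {b : ℕ} (hω : ω ≠ 1)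
    (hωb : ω ^ b = 1) : ∑ k ∈ range b, (k : K) * ω ^ k = b / (ω - 1) := by
  have h := mul_sum_range_mul_pow ω b
  rw [hωb, geom_sum_eq_zero_of_pow_eq_one hω hωb] at h
  rw [eq_div_iff (sub_ne_zero.2 hω)]
  linear_combination h

noncomputable def haarNode (b j m k : ℕ) : ℝ := ((b:ℝ) ^ (j + 1))⁻¹ * (b * m + k)

section Haar

variable {b j m : ℕ}

lemma haarNode_mono : Monotone (haarNode b j m) := fun k k' hk => by
  unfold haarNode
  gcongr

lemma haarNode_succ_sub (k : ℕ) :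
    haarNode b j m (k + 1) - haarNode b j m k = ((b:ℝ) ^ (j + 1))⁻¹ := by
  unfold haarNode
  push_cast
  ring

lemma haarNode_zero (hb : b ≠ 0) : haarNode b j m 0 = m / (b:ℝ) ^ j := by
  unfold haarNode
  field_simp
  ring

lemma haarNode_self (hb : b ≠ 0) : haarNode b j m b = (m + 1) / (b:ℝ) ^ j := by
  unfold haarNode
  field_simp
  ring

lemma Ico_haarNode_subset_Ico (hb : b ≠ 0) (hm : m < b ^ j) :
    Set.Ico (haarNode b j m 0) (haarNode b j m b) ⊆ Set.Ico 0 1 := by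
  refine Set.Ico_subset_Ico (by unfold haarNode; positivity) ?_
  rw [haarNode_self hb, div_le_one (by positivity)]
  exact_mod_cast hm

lemma haar_eq_sum_indicator (ℓ : ℕ) (x : ℝ) :
    haar b j m ℓ x = ∑ k ∈ range b,
      (Set.Ico (haarNode b j m k) (haarNode b j m (k + 1))).indicator (fun _ => bexp b ℓ k) x := by
  refine sum_congr rfl fun k _ => ?_
  simp only [Set.indicator_apply, Set.mem_Ico, haarNode, Nat.cast_succ, add_assoc]

lemma haar_eq_zero_of_notMem (ℓ : ℕ) {x : ℝ}
    (hx : x ∉ Set.Ico (haarNode b j m 0) (haarNode b j m b)) : haar b j m ℓ x = 0 := by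
  rw [haar_eq_sum_indicator]
  refine sum_eq_zero fun k hk => Set.indicator_of_notMem (fun hk' => hx ?_) _
  exact Set.Ico_subset_Ico (haarNode_mono (Nat.zero_le k)) (haarNode_mono (mem_range.1 hk)) hk'

lemma setIntegral_mul_haar (ℓ : ℕ) (hb : b ≠ 0) (hm : m < b ^ j) {g : ℝ → ℂ}
    (hg : IntegrableOn g (Set.Ico 0 1)) :
    ∫ x in Set.Ico 0 1, g x * haar b j m ℓ x
      = ∑ k ∈ range b,
          (∫ x in Set.Ico (haarNode b j m k) (haarNode b j m (k + 1)), g x) * bexp b ℓ k := by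
  have hsub : ∀ k ∈ range b, Set.Ico (haarNode b j m k) (haarNode b j m (k + 1)) ⊆ Set.Ico 0 1 :=
    fun k hk => (Set.Ico_subset_Ico (haarNode_mono (Nat.zero_le k))
      (haarNode_mono (mem_range.1 hk))).trans (Ico_haarNode_subset_Ico hb hm)
  have hind : ∀ k x, g x * (Set.Ico (haarNode b j m k) (haarNode b j m (k + 1))).indicator
      (fun _ => bexp b ℓ k) x
      = (Set.Ico (haarNode b j m k) (haarNode b j m (k + 1))).indicator
      (fun y => g y * bexp b ℓ k) x := fun k x => (Set.indicator_mul_right _ g _).symm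
  simp_rw [haar_eq_sum_indicator (b := b) (j := j) (m := m) ℓ, mul_sum, hind]
  rw [integral_finsetSum _ fun k _ => (hg.mul_const _).indicator measurableSet_Ico]
  refine sum_congr rfl fun k hk => ?_
  rw [setIntegral_indicator measurableSet_Ico, Set.inter_eq_right.2 (hsub k hk),
    integral_mul_const]

end Haar

lemma integral_Ico_affine (α β : ℝ) {a a' : ℝ} (h : a ≤ a') :
    ∫ x in Set.Ico a a', α + β * x = α * (a' - a) + β * (a' ^ 2 - a ^ 2) / 2 := by
  rw [integral_Ico_eq_integral_Ioo, ← integral_Ioc_eq_integral_Ioo,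
    ← intervalIntegral.integral_of_le h, intervalIntegral.integral_add intervalIntegrable_const
      (intervalIntegral.intervalIntegrable_id.const_mul β),
    intervalIntegral.integral_const, intervalIntegral.integral_const_mul, integral_id, smul_eq_mul]
  ring

section HaarCoeff

variable {b j m ℓ : ℕ}

lemma setIntegral_affine_mul_haar (hm : m < b ^ j) (hℓ : ℓ ≠ 0) (hℓb : ℓ < b) (α β : ℝ) :
    ∫ x in Set.Ico 0 1, ((α + β * x : ℝ) : ℂ) * haar b j m ℓ x
      = ((β * (((b:ℝ) ^ (j + 1))⁻¹) ^ 2 : ℝ) : ℂ) * (b / (exp (2 * Real.pi * I * ℓ / b) - 1)) := by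
  have hb : b ≠ 0 := by omega
  set δ : ℝ := ((b:ℝ) ^ (j + 1))⁻¹
  set ω : ℂ := exp (2 * Real.pi * I * ℓ / b)
  have hω : ω ≠ 1 := exp_two_pi_mul_I_mul_div_ne_one hℓ hℓb
  have hωb : ω ^ b = 1 := exp_two_pi_mul_I_mul_div_pow_eq_one b ℓ hb
  have hcont : Continuous fun x : ℝ => ((α + β * x : ℝ) : ℂ) := by fun_prop
  have hterm : ∀ k : ℕ,
      (∫ x in Set.Ico (haarNode b j m k) (haarNode b j m (k + 1)), ((α + β * x : ℝ) : ℂ))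
        * bexp b ℓ k
      = ((α * δ + β * δ ^ 2 * (b * m + 1 / 2) : ℝ) : ℂ) * ω ^ k
        + ((β * δ ^ 2 : ℝ) : ℂ) * ((k : ℂ) * ω ^ k) := by
    intro k
    have hnode : haarNode b j m (k + 1) = haarNode b j m k + δ := by
      linarith [haarNode_succ_sub (b := b) (j := j) (m := m) k]
    have hcast : ∫ x in Set.Ico (haarNode b j m k) (haarNode b j m (k + 1)), ((α + β * x : ℝ) : ℂ)
        = ((∫ x in Set.Ico (haarNode b j m k) (haarNode b j m (k + 1)), α + β * x : ℝ) : ℂ) :=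
      integral_ofReal
    have hN : haarNode b j m k = δ * (b * m + k) := rfl
    have hbexp : bexp b ℓ k = ω ^ k := bexp_eq_pow b ℓ k
    rw [hcast, integral_Ico_affine α β (haarNode_mono k.le_succ), hnode, hN, hbexp]
    push_cast
    ring
  rw [setIntegral_mul_haar ℓ hb hm (hcont.integrableOn_Icc.mono_set Set.Ico_subset_Icc_self),
    sum_congr rfl fun k _ => hterm k, sum_add_distrib, ← mul_sum, ← mul_sum,
    geom_sum_eq_zero_of_pow_eq_one hω hωb, sum_range_mul_pow_of_pow_eq_one hω hωb,
    mul_zero, zero_add]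

lemma setIntegral_mul_haar_of_eqOn_affine (hm : m < b ^ j) (hℓ : ℓ ≠ 0) (hℓb : ℓ < b)
    {g : ℝ → ℝ} {α β : ℝ}
    (hg : Set.EqOn g (fun x => α + β * x) (Set.Ioo (haarNode b j m 0) (haarNode b j m b))) :
    ∫ x in Set.Ico 0 1, (g x : ℂ) * haar b j m ℓ x
      = ((β * (((b:ℝ) ^ (j + 1))⁻¹) ^ 2 : ℝ) : ℂ) * (b / (exp (2 * Real.pi * I * ℓ / b) - 1)) := by
  rw [← setIntegral_affine_mul_haar hm hℓ hℓb α β]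
  refine setIntegral_congr_ae measurableSet_Ico ?_
  filter_upwards [measure_eq_zero_iff_ae_notMem.1 (measure_singleton (haarNode b j m 0))]
    with x hx _
  by_cases hxI : x ∈ Set.Ico (haarNode b j m 0) (haarNode b j m b)
  · rw [hg ⟨lt_of_le_of_ne hxI.1 (Ne.symm hx), hxI.2⟩]
  · rw [haar_eq_zero_of_notMem ℓ hxI, mul_zero, mul_zero]

end HaarCoeff

lemma lt_iff_le_of_mul_eq_natCast {x y B : ℝ} {N m : ℕ} (hB : 0 < B) (hy : y * B = N)
    (hx : x ∈ Set.Ioo (m / B) ((m + 1) / B)) : y < x ↔ y ≤ m / B := by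
  refine ⟨fun hyx => ?_, fun hy' => hy'.trans_lt hx.1⟩
  have hN : (N : ℝ) < m + 1 := by
    rw [← hy]
    exact (mul_lt_mul_of_pos_right hyx hB).trans ((lt_div_iff₀ hB).1 hx.2)
  have hNm : (N : ℝ) ≤ m := by exact_mod_cast Nat.lt_succ_iff.1 (by exact_mod_cast hN)
  rw [le_div_iff₀ hB, hy]
  exact hNm

section Hammersley

variable {b n : ℕ}

lemma exists_z1_mul_pow_eq_natCast (hb : b ≠ 0) {j : ℕ} (hnj : n ≤ j) (t : Fin n → Fin b) :
    ∃ N : ℕ, z1 b n t * (b:ℝ) ^ j = N := by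
  refine ⟨∑ i : Fin n, (t i : ℕ) * b ^ (j - (n - i)), ?_⟩
  rw [z1, sum_mul]
  push_cast
  refine sum_congr rfl fun i _ => ?_
  rw [pow_sub₀ (b:ℝ) (by exact_mod_cast hb) (show n - i ≤ j by omega)]
  ring

lemma z1_lt_iff_le_haarNode_zero (hb : b ≠ 0) {j m : ℕ} (hnj : n ≤ j) (t : Fin n → Fin b) {x : ℝ}
    (hx : x ∈ Set.Ioo (haarNode b j m 0) (haarNode b j m b)) :
    z1 b n t < x ↔ z1 b n t ≤ haarNode b j m 0 := by
  obtain ⟨N, hN⟩ := exists_z1_mul_pow_eq_natCast hb hnj t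
  rw [haarNode_zero hb, haarNode_self hb] at *
  exact lt_iff_le_of_mul_eq_natCast (by positivity) hN hx

lemma integrableOn_ite_lt_one_zero (c : ℝ) {s : Set ℝ} (hs : volume s ≠ ⊤) :
    IntegrableOn (fun x : ℝ => if c < x then (1:ℝ) else 0) s := by
  have h : (fun x : ℝ => if c < x then (1:ℝ) else 0) = (Set.Ioi c).indicator 1 := by
    ext x
    simp [Set.indicator_apply]
  rw [h]
  exact (integrableOn_const hs).indicator measurableSet_Ioi

lemma integral_disc_snd (s : Fin n → ℕ → ℕ) (x₁ : ℝ) :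
    ∫ x₂ in Set.Ico 0 1, disc b n s x₁ x₂
      = (b:ℝ) ^ (-(n:ℤ)) * ∑ t : Fin n → Fin b, (if z1 b n t < x₁ then (1:ℝ) else 0)
          * (∫ x₂ in Set.Ico 0 1, if z2 b n s t < x₂ then (1:ℝ) else 0)
        - x₁ / 2 := by
  have hvol : volume (Set.Ico (0:ℝ) 1) ≠ ⊤ := by simp
  have hstep : ∀ t : Fin n → Fin b, IntegrableOn (fun x₂ => (if z1 b n t < x₁ then (1:ℝ) else 0)
      * if z2 b n s t < x₂ then (1:ℝ) else 0) (Set.Ico 0 1) :=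
    fun t => (integrableOn_ite_lt_one_zero _ hvol).const_mul _
  have hlin : IntegrableOn (fun x₂ : ℝ => x₁ * x₂) (Set.Ico 0 1) :=
    (continuous_const.mul continuous_id).integrableOn_Icc.mono_set Set.Ico_subset_Icc_self
  have hid : ∫ x₂ in Set.Ico (0:ℝ) 1, x₂ = 1 / 2 := by
    rw [integral_Ico_eq_integral_Ioo, ← integral_Ioc_eq_integral_Ioo,
      ← intervalIntegral.integral_of_le zero_le_one, integral_id]
    norm_num
  unfold disc
  rw [integral_sub ((integrable_finsetSum _ fun t _ => hstep t).const_mul _) hlin,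
    integral_const_mul, integral_finsetSum _ fun t _ => hstep t, integral_const_mul, hid]
  simp only [integral_const_mul]
  ring

end Hammersley

theorem abs_haar_coeff_disc_mixed_eq_general (b n : ℕ)
    (s : Fin n → ℕ → ℕ)
    (j₁ m₁ ℓ₁ : ℕ) (hj : n ≤ j₁) (hm₁ : m₁ < b ^ j₁)
    (hℓ₁ : 1 ≤ ℓ₁) (hℓ₁' : ℓ₁ ≤ b - 1) :
    ‖(∫ x₁ in Set.Ico (0:ℝ) 1, ∫ x₂ in Set.Ico (0:ℝ) 1,
        ((disc b n s x₁ x₂ : ℝ) : ℂ) * haar b j₁ m₁ ℓ₁ x₁)‖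
      = (1/2) * (b:ℝ) ^ (-2*(j₁:ℤ) - 1) /
          ‖(Complex.exp (2 * Real.pi * Complex.I * ℓ₁ / b) - 1)‖ := by
  have hb : b ≠ 0 := by omega
  have hinner : ∀ x₁ : ℝ, ∫ x₂ in Set.Ico (0:ℝ) 1, ((disc b n s x₁ x₂ : ℝ) : ℂ) * haar b j₁ m₁ ℓ₁ x₁
      = ((∫ x₂ in Set.Ico (0:ℝ) 1, disc b n s x₁ x₂ : ℝ) : ℂ) * haar b j₁ m₁ ℓ₁ x₁ := fun x₁ => by
    rw [integral_mul_const]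
    exact congrArg (· * _) integral_ofReal
  have haffine : Set.EqOn (fun x₁ => ∫ x₂ in Set.Ico (0:ℝ) 1, disc b n s x₁ x₂)
      (fun x₁ => (b:ℝ) ^ (-(n:ℤ)) * ∑ t : Fin n → Fin b,
          (if z1 b n t ≤ haarNode b j₁ m₁ 0 then (1:ℝ) else 0)
            * (∫ x₂ in Set.Ico 0 1, if z2 b n s t < x₂ then (1:ℝ) else 0) + (-1 / 2) * x₁)
      (Set.Ioo (haarNode b j₁ m₁ 0) (haarNode b j₁ m₁ b)) := fun x₁ hx₁ => by
    simp only [integral_disc_snd, z1_lt_iff_le_haarNode_zero hb hj _ hx₁]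
    ring
  simp only [hinner]
  rw [setIntegral_mul_haar_of_eqOn_affine hm₁ (by omega) (by omega) haffine, norm_mul,
    Complex.norm_real, norm_div, Complex.norm_natCast, Real.norm_eq_abs]
  have hpow : (b:ℝ) ^ (-2 * (j₁:ℤ) - 1) = (((b:ℝ) ^ (j₁ + 1))⁻¹) ^ 2 * b := by
    rw [show -2 * (j₁:ℤ) - 1 = -((2 * j₁ + 1 : ℕ) : ℤ) by push_cast; ring, zpow_neg, zpow_natCast]
    field_simp
    ring
  rw [hpow, abs_mul, abs_of_neg (by norm_num), abs_of_nonneg (by positivity)]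
  ring

/-- Proposition 5.1 (vi): for `j₁ ≥ n`, the Haar coefficient of the discrepancy function
for the index `j = (j₁, −1)` (second factor `h_{−1,0,1} = 1_{[0,1)}`) has absolute value
`(1/2)·b^{−2j₁−1}/|e(ℓ₁)−1|`. -/
theorem abs_haar_coeff_disc_mixed_eq (b n : ℕ) (hb : 2 ≤ b) (hn : 1 ≤ n)
    (s : Fin n → ℕ → ℕ) (hs : IsDigitMaps b n s)
    (j₁ m₁ ℓ₁ : ℕ) (hj : n ≤ j₁) (hm₁ : m₁ < b ^ j₁)
    (hℓ₁ : 1 ≤ ℓ₁) (hℓ₁' : ℓ₁ ≤ b - 1) :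
    ‖(∫ x₁ in Set.Ico (0:ℝ) 1, ∫ x₂ in Set.Ico (0:ℝ) 1,
        ((disc b n s x₁ x₂ : ℝ) : ℂ) * haar b j₁ m₁ ℓ₁ x₁)‖
      = (1/2) * (b:ℝ) ^ (-2*(j₁:ℤ) - 1) /
          ‖(Complex.exp (2 * Real.pi * Complex.I * ℓ₁ / b) - 1)‖ :=
  abs_haar_coeff_disc_mixed_eq_general b n s j₁ m₁ ℓ₁ hj hm₁ hℓ₁ hℓ₁'
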